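/- Let M be an integral lattice of hyperbolic signature (1,r) containing a vector h₄ with h₄·h₄ = 6, and let v₁, v₂, v₃ ∈ M be three distinct isotropic vectors with v_i·h₄ = 2 and v_i·v_j = 1 for i ≠ j. Then h₄ = v₁ + v₂ + v₃, the sublattice spanned by v₁,v₂,v₃ is isometric to U ⊥ ⟨−2⟩, and there is no fourth isotropic vector v₄ distinct from v₁,v₂,v₃ with v₄·h₄ = 2 and v₄·v_i = 1 for all i. -/

import Mathlib

/-!
A negative definite subspace of codimension one meets every plane, so the orthogonal complement
of a vector of positive square is negative definite; in particular it contains no nonzero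
isotropic vector. The vector `h₄ - (v₁ + v₂ + v₃)` is isotropic and orthogonal to `h₄`, hence
zero. The basis `v₁, v₂, v₃ - v₁ - v₂` of their span has Gram matrix `U ⊥ ⟨-2⟩`. Pairing a
fourth such vector with `h₄ = v₁ + v₂ + v₃` would give `2 = 3`.
-/

theorem Submodule.span_triple_sub_sub {R M : Type*} [Ring R] [AddCommGroup M] [Module R M]
    (a b c : M) :
    span R {a, b, c - a - b} = span R {a, b, c} := by
  have ha : a ∈ span R {a, b, c} := subset_span (by simp)
  have hb : b ∈ span R {a, b, c} := subset_span (by simp)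
  have hc : c ∈ span R {a, b, c} := subset_span (by simp)
  have ha' : a ∈ span R {a, b, c - a - b} := subset_span (by simp)
  have hb' : b ∈ span R {a, b, c - a - b} := subset_span (by simp)
  have hc' : c - a - b ∈ span R {a, b, c - a - b} := subset_span (by simp)
  refine le_antisymm ?_ ?_ <;> simp only [span_le, Set.insert_subset_iff, Set.singleton_subset_iff]
  · exact ⟨ha, hb, sub_mem (sub_mem hc ha) hb⟩
  · refine ⟨ha', hb', ?_⟩
    simpa only [SetLike.mem_coe, sub_sub, sub_add_cancel] using add_mem hc' (add_mem ha' hb')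

theorem Submodule.exists_smul_sub_mem_of_isCompl_of_finrank_eq_one {K V : Type*} [Field K]
    [AddCommGroup V] [Module K V] {P N : Submodule K V}
    (hPN : IsCompl P N) (hP : Module.finrank K P = 1) {w : V} (hw : w ∉ N) (h : V) :
    ∃ c : K, c • w - h ∈ N := by
  obtain ⟨p, n, hp, hn, rfl⟩ := Submodule.codisjoint_iff_exists_add_eq.mp hPN.codisjoint w
  obtain ⟨q, m, hq, hm, rfl⟩ := Submodule.codisjoint_iff_exists_add_eq.mp hPN.codisjoint h
  have hp0 : (⟨p, hp⟩ : P) ≠ 0 := by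
    rintro hp0
    obtain rfl : p = 0 := congrArg Subtype.val hp0
    exact hw (by simpa using hn)
  obtain ⟨c, hc⟩ := (finrank_eq_one_iff_of_nonzero' _ hp0).mp hP ⟨q, hq⟩
  refine ⟨c, ?_⟩
  have hcq : c • p = q := congrArg Subtype.val hc
  have : c • (p + n) - (q + m) = c • n - m := by rw [← hcq]; module
  rw [this]
  exact N.sub_mem (N.smul_mem c hn) hm

theorem apply_self_neg_of_orthogonal {V : Type*} [AddCommGroup V] [Module ℝ V]
    {φ : V →ₗ[ℝ] V →ₗ[ℝ] ℝ} (hsymm : ∀ x y : V, φ x y = φ y x) {P N : Submodule ℝ V}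
    (hPN : IsCompl P N) (hP : Module.finrank ℝ P = 1) (hN : ∀ x ∈ N, x ≠ 0 → φ x x < 0)
    {h w : V} (hh : 0 < φ h h) (hwh : φ w h = 0) (hw : w ≠ 0) : φ w w < 0 := by
  by_cases hwN : w ∈ N
  · exact hN w hwN hw
  obtain ⟨c, hc⟩ := Submodule.exists_smul_sub_mem_of_isCompl_of_finrank_eq_one hPN hP hwN h
  have hx : c • w - h ≠ 0 := by
    intro hx
    nth_rewrite 1 [← sub_eq_zero.mp hx] at hh
    simp [hwh] at hh
  have hxx : φ (c • w - h) (c • w - h) = c ^ 2 * φ w w + φ h h := by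
    simp only [map_sub, map_smul, LinearMap.sub_apply, LinearMap.smul_apply, smul_eq_mul,
      hsymm h w, hwh]
    ring
  have hneg := hN _ hc hx
  nlinarith [sq_nonneg c]

theorem hyperbolic_lattice_three_isotropic_vectors_sum_general
    {V : Type*} [AddCommGroup V] [Module ℝ V]
    (r : ℕ)
    (φ : V →ₗ[ℝ] V →ₗ[ℝ] ℝ)
    (hsymm : ∀ x y : V, φ x y = φ y x)
    (hsig : ∃ P N : Submodule ℝ V, IsCompl P N ∧
      Module.finrank ℝ P = 1 ∧ Module.finrank ℝ N = r ∧
      (∀ x ∈ P, x ≠ 0 → 0 < φ x x) ∧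
      (∀ x ∈ N, x ≠ 0 → φ x x < 0) ∧
      (∀ x ∈ P, ∀ y ∈ N, φ x y = 0))
    (h₄ v₁ v₂ v₃ : V)
    (hh : φ h₄ h₄ = 6)
    (hiso : φ v₁ v₁ = 0 ∧ φ v₂ v₂ = 0 ∧ φ v₃ v₃ = 0)
    (hvh : φ v₁ h₄ = 2 ∧ φ v₂ h₄ = 2 ∧ φ v₃ h₄ = 2)
    (hvv : φ v₁ v₂ = 1 ∧ φ v₁ v₃ = 1 ∧ φ v₂ v₃ = 1) :
    h₄ = v₁ + v₂ + v₃ ∧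
    (∃ a b c : V,
      Submodule.span ℤ {a, b, c} = Submodule.span ℤ {v₁, v₂, v₃} ∧
      φ a a = 0 ∧ φ b b = 0 ∧ φ a b = 1 ∧
      φ c c = -2 ∧ φ a c = 0 ∧ φ b c = 0) ∧
    ¬∃ v₄ : V, v₄ ≠ v₁ ∧ v₄ ≠ v₂ ∧ v₄ ≠ v₃ ∧ φ v₄ v₄ = 0 ∧
      φ v₄ h₄ = 2 ∧ φ v₄ v₁ = 1 ∧ φ v₄ v₂ = 1 ∧ φ v₄ v₃ = 1 := by
  obtain ⟨P, N, hPN, hP, -, -, hN, -⟩ := hsig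
  obtain ⟨h11, h22, h33⟩ := hiso
  obtain ⟨h1h, h2h, h3h⟩ := hvh
  obtain ⟨h12, h13, h23⟩ := hvv
  have hsum : h₄ = v₁ + v₂ + v₃ := by
    set d := h₄ - (v₁ + v₂ + v₃)
    have hdh : φ d h₄ = 0 := by norm_num [d, h1h, h2h, h3h, hh]
    have hdd : φ d d = 0 := by
      norm_num [d, hsymm v₂ v₁, hsymm v₃ v₁, hsymm v₃ v₂, hsymm h₄, h1h, h2h, h3h, hh, h11, h22,
        h33, h12, h13, h23]
    by_contra hne
    exact (apply_self_neg_of_orthogonal hsymm hPN hP hN (by rw [hh]; norm_num) hdh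
      (sub_ne_zero.mpr hne)).ne hdd
  refine ⟨hsum, ⟨v₁, v₂, v₃ - v₁ - v₂, ?_, h11, h22, h12, ?_, ?_, ?_⟩, ?_⟩
  · exact Submodule.span_triple_sub_sub v₁ v₂ v₃
  · norm_num [hsymm v₂ v₁, hsymm v₃ v₁, hsymm v₃ v₂, h11, h22, h33, h12, h13, h23]
  · simp [h11, h12, h13]
  · simp [hsymm v₂ v₁, h22, h12, h23]
  · rintro ⟨v₄, -, -, -, -, h4h, h41, h42, h43⟩
    norm_num [hsum, h41, h42, h43] at h4h

/-- Let `φ` have hyperbolic signature `(1,r)`, `h₄` a vector with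
`h₄·h₄ = 6`, and `v₁, v₂, v₃` three distinct isotropic vectors with `vᵢ·h₄ = 2` and
`vᵢ·vⱼ = 1` for `i ≠ j`.  Then `h₄ = v₁+v₂+v₃`, the sublattice spanned by `v₁,v₂,v₃` is
isometric to `U ⊥ ⟨-2⟩`, and there is no fourth such isotropic vector. -/
theorem hyperbolic_lattice_three_isotropic_vectors_sum
    {V : Type*} [AddCommGroup V] [Module ℝ V] [FiniteDimensional ℝ V]
    (r : ℕ)
    (φ : V →ₗ[ℝ] V →ₗ[ℝ] ℝ)
    (hsymm : ∀ x y : V, φ x y = φ y x)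
    (hsig : ∃ P N : Submodule ℝ V, IsCompl P N ∧
      Module.finrank ℝ P = 1 ∧ Module.finrank ℝ N = r ∧
      (∀ x ∈ P, x ≠ 0 → 0 < φ x x) ∧
      (∀ x ∈ N, x ≠ 0 → φ x x < 0) ∧
      (∀ x ∈ P, ∀ y ∈ N, φ x y = 0))
    (h₄ v₁ v₂ v₃ : V)
    (hdist : v₁ ≠ v₂ ∧ v₁ ≠ v₃ ∧ v₂ ≠ v₃)
    (hh : φ h₄ h₄ = 6)
    (hiso : φ v₁ v₁ = 0 ∧ φ v₂ v₂ = 0 ∧ φ v₃ v₃ = 0)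
    (hvh : φ v₁ h₄ = 2 ∧ φ v₂ h₄ = 2 ∧ φ v₃ h₄ = 2)
    (hvv : φ v₁ v₂ = 1 ∧ φ v₁ v₃ = 1 ∧ φ v₂ v₃ = 1) :
    h₄ = v₁ + v₂ + v₃ ∧
    (∃ a b c : V,
      Submodule.span ℤ {a, b, c} = Submodule.span ℤ {v₁, v₂, v₃} ∧
      φ a a = 0 ∧ φ b b = 0 ∧ φ a b = 1 ∧
      φ c c = -2 ∧ φ a c = 0 ∧ φ b c = 0) ∧
    ¬∃ v₄ : V, v₄ ≠ v₁ ∧ v₄ ≠ v₂ ∧ v₄ ≠ v₃ ∧ φ v₄ v₄ = 0 ∧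
      φ v₄ h₄ = 2 ∧ φ v₄ v₁ = 1 ∧ φ v₄ v₂ = 1 ∧ φ v₄ v₃ = 1 :=
  hyperbolic_lattice_three_isotropic_vectors_sum_general r φ hsymm hsig h₄ v₁ v₂ v₃ hh hiso hvh hvv
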